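/- arXiv:1609.07638 — 2 statements merged into one kernel-verified Lean document; each statement's English description precedes it below -/
import Mathlib

section
/- For all integers n ≥ r ≥ 0, the number of assemblées of size (n+1, r+1) equals the Lah number C(n,r)·(n+1)!/(r+1)!. -/
open Finset

/-- An assemblée (in canonical order) of size `(n, r)`, encoded as a permutation
`w` of `Fin n` (position `p` holds the value `(w p : ℕ) + 1 ∈ {1,…,n}`) together
with the set `E` of positions of the `r` block-ends: the last position is a
block-end, and the block-end values decrease from left to right. -/
def IsAssemblee (n r : ℕ) (w : Equiv.Perm (Fin n)) (E : Finset (Fin n)) : Prop :=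
  E.card = r ∧
  (∀ p : Fin n, (p : ℕ) = n - 1 → p ∈ E) ∧
  (∀ p ∈ E, ∀ q ∈ E, p < q → w q < w p)

instance (n r : ℕ) :
    DecidablePred fun x : Equiv.Perm (Fin n) × Finset (Fin n) => IsAssemblee n r x.1 x.2 :=
  fun _ => by unfold IsAssemblee; infer_instance

/-- The type of assemblées of size `(n, r)`, in canonical order. -/
def Assemblee (n r : ℕ) : Type :=
  {x : Equiv.Perm (Fin n) × Finset (Fin n) // IsAssemblee n r x.1 x.2}

instance (n r : ℕ) : Fintype (Assemblee n r) := Subtype.fintype _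

namespace Assemblee

variable {n r : ℕ}

/-- The value (an element of `{1,…,n}`) at position `p`. -/
def val (A : Assemblee n r) (p : Fin n) : ℕ := (A.1.1 p : ℕ) + 1

/-- The set of positions of the block-ends. -/
def ends (A : Assemblee n r) : Finset (Fin n) := A.1.2

/-- The set of values of the block-ends. -/
def blockEnds (A : Assemblee n r) : Finset ℕ := A.ends.image A.val

/-- The largest block-end `b₁`. -/
def b1 (A : Assemblee n r) : ℕ := WithBot.unbotD 0 A.blockEnds.max

/-- The smallest block-end `b_r`. -/
def br (A : Assemblee n r) : ℕ := WithTop.untopD 0 A.blockEnds.min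

/-- The left-right sequence of `A`: those values `x > b₁` such that every value
`y > x` occurs to the left of `x`. -/
def lrs (A : Assemblee n r) : Finset ℕ :=
  (univ.filter fun p : Fin n =>
      A.b1 < A.val p ∧ ∀ q : Fin n, A.val p < A.val q → q < p).image A.val

/-- The right-left sequence of `A`: those values `x < b_r` such that every value
`y` with `x < y < b_r` occurs to the right of `x`. -/
def rls (A : Assemblee n r) : Finset ℕ :=
  (univ.filter fun p : Fin n =>
      A.val p < A.br ∧ ∀ q : Fin n, A.val p < A.val q → A.val q < A.br → p < q).image A.val

end Assemblee

section Build

variable {N R : ℕ}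

/-- The increasing enumeration of the complement of `E`. -/
def compIso (E : Finset (Fin N)) (hE : E.card = R) : Fin (N - R) ≃ {x : Fin N // x ∉ E} :=
  ((Eᶜ).orderIsoOfFin (by simp [Finset.card_compl, hE])).toEquiv.trans
    (Equiv.subtypeEquivRight fun x => Finset.mem_compl)

/-- The permutation with values `S` in decreasing order on positions `E`, and given by `σ`
(via the increasing enumerations of the complements) elsewhere. -/
def buildPerm (E S : Finset (Fin N)) (hE : E.card = R) (hS : S.card = R)
    (σ : Equiv.Perm (Fin (N - R))) : Equiv.Perm (Fin N) :=
  (Equiv.sumCompl (· ∈ E)).symm.trans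
    (Equiv.trans
      (Equiv.sumCongr
        ((E.orderIsoOfFin hE).toEquiv.symm.trans
          ((Fin.revPerm).trans (S.orderIsoOfFin hS).toEquiv))
        ((compIso E hE).symm.trans (σ.trans (compIso S hS))))
      (Equiv.sumCompl (· ∈ S)))

theorem buildPerm_apply_mem {E S : Finset (Fin N)} {hE : E.card = R} {hS : S.card = R}
    {σ : Equiv.Perm (Fin (N - R))} {p : Fin N} (hp : p ∈ E) :
    buildPerm E S hE hS σ p =
      (S.orderIsoOfFin hS (Fin.revPerm ((E.orderIsoOfFin hE).symm ⟨p, hp⟩)) : Fin N) := by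
  unfold buildPerm
  rw [Equiv.trans_apply, Equiv.trans_apply, Equiv.sumCompl_symm_apply_of_pos hp]
  rfl

theorem buildPerm_apply_not_mem {E S : Finset (Fin N)} {hE : E.card = R} {hS : S.card = R}
    {σ : Equiv.Perm (Fin (N - R))} {p : Fin N} (hp : p ∉ E) :
    buildPerm E S hE hS σ p =
      (compIso S hS (σ ((compIso E hE).symm ⟨p, hp⟩)) : Fin N) := by
  unfold buildPerm
  rw [Equiv.trans_apply, Equiv.trans_apply, Equiv.sumCompl_symm_apply_of_neg hp]
  rfl

theorem buildPerm_mem {E S : Finset (Fin N)} {hE : E.card = R} {hS : S.card = R}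
    {σ : Equiv.Perm (Fin (N - R))} {p : Fin N} (hp : p ∈ E) :
    buildPerm E S hE hS σ p ∈ S := by
  rw [buildPerm_apply_mem hp]
  exact (S.orderIsoOfFin hS _).2

theorem buildPerm_not_mem {E S : Finset (Fin N)} {hE : E.card = R} {hS : S.card = R}
    {σ : Equiv.Perm (Fin (N - R))} {p : Fin N} (hp : p ∉ E) :
    buildPerm E S hE hS σ p ∉ S := by
  rw [buildPerm_apply_not_mem hp]
  exact (compIso S hS _).2

theorem buildPerm_anti {E S : Finset (Fin N)} {hE : E.card = R} {hS : S.card = R}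
    {σ : Equiv.Perm (Fin (N - R))} {p q : Fin N} (hp : p ∈ E) (hq : q ∈ E) (hpq : p < q) :
    buildPerm E S hE hS σ q < buildPerm E S hE hS σ p := by
  rw [buildPerm_apply_mem hp, buildPerm_apply_mem hq]
  have h1 : (E.orderIsoOfFin hE).symm ⟨p, hp⟩ < (E.orderIsoOfFin hE).symm ⟨q, hq⟩ :=
    (E.orderIsoOfFin hE).symm.lt_iff_lt.mpr (Subtype.mk_lt_mk.mpr hpq)
  have h2 : Fin.revPerm ((E.orderIsoOfFin hE).symm ⟨q, hq⟩) <
      Fin.revPerm ((E.orderIsoOfFin hE).symm ⟨p, hp⟩) := by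
    simpa using Fin.rev_lt_rev.mpr h1
  exact Subtype.coe_lt_coe.mpr ((S.orderIsoOfFin hS).lt_iff_lt.mpr h2)

/-- Any permutation strictly decreasing on `E` agrees on `E` with the canonical one. -/
theorem anti_eq_sorted {w : Equiv.Perm (Fin N)} {E : Finset (Fin N)} (hE : E.card = R)
    (hS : (E.image w).card = R)
    (anti : ∀ p ∈ E, ∀ q ∈ E, p < q → w q < w p) {p : Fin N} (hp : p ∈ E) :
    w p = ((E.image w).orderIsoOfFin hS (Fin.revPerm ((E.orderIsoOfFin hE).symm ⟨p, hp⟩)) : Fin N) := by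
  let f : Fin R → Fin N := fun i => w (E.orderIsoOfFin hE (Fin.revPerm i))
  have hmono : StrictMono f := by
    intro i j hij
    have h1 : (Fin.revPerm j : Fin R) < Fin.revPerm i := by simpa using Fin.rev_lt_rev.mpr hij
    have h2 : (E.orderIsoOfFin hE (Fin.revPerm j) : Fin N) < E.orderIsoOfFin hE (Fin.revPerm i) :=
      Subtype.coe_lt_coe.mpr ((E.orderIsoOfFin hE).lt_iff_lt.mpr h1)
    exact anti _ (E.orderIsoOfFin hE _).2 _ (E.orderIsoOfFin hE _).2 h2
  have hfs : ∀ i, f i ∈ E.image w := fun i =>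
    Finset.mem_image_of_mem _ (E.orderIsoOfFin hE _).2
  have heq := Finset.orderEmbOfFin_unique hS hfs hmono
  have key := congrFun heq (Fin.revPerm ((E.orderIsoOfFin hE).symm ⟨p, hp⟩))
  simp only [f, Fin.revPerm_apply, Fin.rev_rev, OrderIso.apply_symm_apply] at key
  simpa using key

end Build

theorem mem_image_perm {N : ℕ} {w : Equiv.Perm (Fin N)} {E : Finset (Fin N)} {a : Fin N} :
    w a ∈ E.image w ↔ a ∈ E := by
  constructor
  · rintro h
    rcases Finset.mem_image.mp h with ⟨b, hb, hba⟩
    rwa [← w.injective hba]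
  · exact fun h => Finset.mem_image_of_mem _ h

theorem card_image_perm {N R : ℕ} {w : Equiv.Perm (Fin N)} {E : Finset (Fin N)}
    (hE : E.card = R) : (E.image w).card = R := by
  rw [Finset.card_image_of_injective _ w.injective]; exact hE

theorem image_buildPerm {N R : ℕ} {E S : Finset (Fin N)} {hE : E.card = R} {hS : S.card = R}
    {σ : Equiv.Perm (Fin (N - R))} : E.image (buildPerm E S hE hS σ) = S := by
  apply Finset.eq_of_subset_of_card_le
  · intro x hx
    rcases Finset.mem_image.mp hx with ⟨p, hp, rfl⟩
    exact buildPerm_mem hp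
  · rw [card_image_perm hE, hS]

theorem sigma_recover {N R : ℕ} {E S : Finset (Fin N)} (hE : E.card = R) (hS : S.card = R)
    (σ : Equiv.Perm (Fin (N - R))) (T : Finset (Fin N)) (hT : T.card = R) (hTS : T = S)
    (hsub : ∀ a, a ∉ E ↔ buildPerm E S hE hS σ a ∉ T) :
    (compIso E hE).trans ((Equiv.subtypeEquiv (buildPerm E S hE hS σ) hsub).trans
      (compIso T hT).symm) = σ := by
  subst hTS
  apply Equiv.ext; intro i
  rw [Equiv.trans_apply, Equiv.trans_apply, Equiv.symm_apply_eq]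
  apply Subtype.ext
  simp only [Equiv.subtypeEquiv_apply]
  rw [buildPerm_apply_not_mem (compIso E hE i).2, Subtype.coe_eta, Equiv.symm_apply_apply]

theorem buildPerm_recover {N R : ℕ} {w : Equiv.Perm (Fin N)} {E : Finset (Fin N)}
    (hE : E.card = R) (hS : (E.image w).card = R)
    (anti : ∀ p ∈ E, ∀ q ∈ E, p < q → w q < w p)
    (hsub : ∀ a, a ∉ E ↔ w a ∉ E.image w) :
    buildPerm E (E.image w) hE hS
      ((compIso E hE).trans ((Equiv.subtypeEquiv w hsub).trans
        (compIso (E.image w) hS).symm)) = w := by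
  apply Equiv.ext; intro p
  by_cases hp : p ∈ E
  · rw [buildPerm_apply_mem hp]
    exact (anti_eq_sorted hE hS anti hp).symm
  · rw [buildPerm_apply_not_mem hp, Equiv.trans_apply, Equiv.trans_apply,
      Equiv.apply_symm_apply, Equiv.apply_symm_apply]
    simp [Equiv.subtypeEquiv_apply]

/-- The main structural equivalence. -/
def assembleeEquiv (N R : ℕ) : Assemblee N R ≃
    ({p : Finset (Fin N) × Finset (Fin N) //
        (p.1.card = R ∧ ∀ q : Fin N, (q : ℕ) = N - 1 → q ∈ p.1) ∧ p.2.card = R}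
      × Equiv.Perm (Fin (N - R))) where
  toFun A :=
    ⟨⟨(A.1.2, A.1.2.image A.1.1), ⟨⟨A.2.1, A.2.2.1⟩, card_image_perm A.2.1⟩⟩,
      (compIso A.1.2 A.2.1).trans
        ((Equiv.subtypeEquiv A.1.1 fun a => not_congr mem_image_perm.symm).trans
          (compIso (A.1.2.image A.1.1) (card_image_perm A.2.1)).symm)⟩
  invFun x :=
    ⟨(buildPerm x.1.1.1 x.1.1.2 x.1.2.1.1 x.1.2.2 x.2, x.1.1.1),
      x.1.2.1.1, x.1.2.1.2, fun p hp q hq hpq => buildPerm_anti hp hq hpq⟩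
  left_inv := by
    rintro ⟨⟨w, E⟩, hE, hlast, anti⟩
    apply Subtype.ext
    refine Prod.ext ?_ rfl
    exact buildPerm_recover hE (card_image_perm hE) anti _
  right_inv := by
    rintro ⟨⟨⟨E, S⟩, ⟨⟨hE, hlast⟩, hS⟩⟩, σ⟩
    have himg : E.image (buildPerm E S hE hS σ) = S := image_buildPerm
    refine Prod.ext (Subtype.ext (Prod.ext rfl himg)) ?_
    exact sigma_recover hE hS σ _ (card_image_perm hE) himg _

theorem lastcond_iff {n : ℕ} (E : Finset (Fin (n + 1))) :
    (∀ q : Fin (n + 1), (q : ℕ) = n + 1 - 1 → q ∈ E) ↔ Fin.last n ∈ E := by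
  constructor
  · exact fun h => h _ (by simp)
  · intro h q hq
    have : q = Fin.last n := Fin.ext (by simpa using hq)
    rwa [this]

theorem card_E (n r : ℕ) :
    Fintype.card {E : Finset (Fin (n + 1)) //
        E.card = r + 1 ∧ ∀ q : Fin (n + 1), (q : ℕ) = n + 1 - 1 → q ∈ E} = n.choose r := by
  rw [Fintype.card_subtype]
  have hb : (univ.filter fun E : Finset (Fin (n + 1)) =>
        E.card = r + 1 ∧ ∀ q : Fin (n + 1), (q : ℕ) = n + 1 - 1 → q ∈ E).card =
      (((univ : Finset (Fin (n + 1))).erase (Fin.last n)).powersetCard r).card := by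
    apply Finset.card_bij' (fun E _ => E.erase (Fin.last n)) (fun T _ => insert (Fin.last n) T)
    · intro E hE
      simp only [Finset.mem_filter, lastcond_iff] at hE
      exact Finset.insert_erase hE.2.2
    · intro T hT
      rw [Finset.mem_powersetCard] at hT
      have hnm : Fin.last n ∉ T := fun h => (Finset.mem_erase.mp (hT.1 h)).1 rfl
      exact Finset.erase_insert hnm
    · intro E hE
      simp only [Finset.mem_filter, lastcond_iff] at hE
      rw [Finset.mem_powersetCard]
      constructor
      · exact Finset.erase_subset_erase _ (Finset.subset_univ _)
      · rw [Finset.card_erase_of_mem hE.2.2, hE.2.1, Nat.add_sub_cancel]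
    · intro T hT
      rw [Finset.mem_powersetCard] at hT
      have hnm : Fin.last n ∉ T := fun h => (Finset.mem_erase.mp (hT.1 h)).1 rfl
      simp only [Finset.mem_filter, lastcond_iff]
      refine ⟨Finset.mem_univ _, ?_, Finset.mem_insert_self _ _⟩
      rw [Finset.card_insert_of_notMem hnm, hT.2]
  rw [hb, Finset.card_powersetCard, Finset.card_erase_of_mem (Finset.mem_univ _),
    Finset.card_univ, Fintype.card_fin, Nat.succ_sub_one]

/-- For all integers `n ≥ r ≥ 0`, the number of assemblées of size
`(n+1, r+1)` equals the Lah number `C(n,r) ⬝ (n+1)! / (r+1)!`. -/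
theorem card_assemblee (n r : ℕ) (hrn : r ≤ n) :
    Fintype.card (Assemblee (n + 1) (r + 1)) =
      n.choose r * (Nat.factorial (n + 1) / Nat.factorial (r + 1)) := by
  have e2 : {p : Finset (Fin (n + 1)) × Finset (Fin (n + 1)) //
      (p.1.card = r + 1 ∧ ∀ q : Fin (n + 1), (q : ℕ) = n + 1 - 1 → q ∈ p.1) ∧
        p.2.card = r + 1} ≃
      {E : Finset (Fin (n + 1)) //
          E.card = r + 1 ∧ ∀ q : Fin (n + 1), (q : ℕ) = n + 1 - 1 → q ∈ E} ×
        {S : Finset (Fin (n + 1)) // S.card = r + 1} :=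
    Equiv.subtypeProdEquivProd (p := fun E : Finset (Fin (n + 1)) =>
      E.card = r + 1 ∧ ∀ q : Fin (n + 1), (q : ℕ) = n + 1 - 1 → q ∈ E)
      (q := fun S : Finset (Fin (n + 1)) => S.card = r + 1)
  rw [Fintype.card_congr (assembleeEquiv (n + 1) (r + 1)), Fintype.card_prod,
    Fintype.card_congr e2, Fintype.card_prod, card_E,
    Fintype.card_finset_len, Fintype.card_fin, Fintype.card_perm, Fintype.card_fin]
  have hsub : n + 1 - (r + 1) = n - r := by omega
  rw [hsub]
  have key : (n + 1).choose (r + 1) * (n - r).factorial =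
      (n + 1).factorial / (r + 1).factorial := by
    symm
    apply Nat.div_eq_of_eq_mul_left (Nat.factorial_pos _)
    have h := Nat.choose_mul_factorial_mul_factorial (Nat.succ_le_succ hrn)
    rw [hsub] at h
    rw [← h]; ring
  rw [mul_assoc, key]
end

section
/- For every assemblée A of size (n,r), the sequence ρ(A) is again an assemblée of size (n,r) whose block-ends are the same values occurring in the same positions as in A, and ρ(ρ(A)) = A; that is, ρ is an involution on the set of assemblées of size (n,r). -/
open Finset

namespace Assemblee

variable {n r : ℕ}

/-- Positions holding values greater than `b₁`. -/
def largeSet (A : Assemblee n r) : Finset (Fin n) :=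
  univ.filter fun q => A.b1 < A.val q

/-- The order-reversing involution on the positions holding values greater
than `b₁` (the `i`-th such position from the left is sent to the `i`-th from
the right). -/
def largeMirror (A : Assemblee n r) (p : Fin n) (hp : p ∈ A.largeSet) : Fin n :=
  (A.largeSet.orderIsoOfFin rfl
    (Fin.rev ((A.largeSet.orderIsoOfFin rfl).symm ⟨p, hp⟩)) : Fin n)

/-- The sequence of values of `ρ(A)`: the subsequence `a₁,…,a_u` of values
greater than `b₁` is reversed in place (`aᵢ ↦ a_{u-i+1}`), every value
`c < b_r` is replaced by `b_r - c`, and all other values are unchanged. -/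
def rhoVal (A : Assemblee n r) (p : Fin n) : ℕ :=
  if hp : p ∈ A.largeSet then A.val (A.largeMirror p hp)
  else if A.val p < A.br then A.br - A.val p
  else A.val p

end Assemblee

namespace Assemblee

variable {n r : ℕ}

lemma val_pos (A : Assemblee n r) (p : Fin n) : 1 ≤ A.val p := Nat.le_add_left 1 _

lemma val_le (A : Assemblee n r) (p : Fin n) : A.val p ≤ n := (A.1.1 p).isLt

lemma val_injective (A : Assemblee n r) : Function.Injective A.val := by
  intro p q h
  exact A.1.1.injective (Fin.ext (by simpa [val] using h))

lemma ends_nonempty (A : Assemblee n r) (hn : 0 < n) : A.ends.Nonempty :=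
  ⟨⟨n - 1, by omega⟩, A.2.2.1 _ rfl⟩

lemma blockEnds_nonempty (A : Assemblee n r) (hn : 0 < n) : A.blockEnds.Nonempty :=
  (A.ends_nonempty hn).image _

lemma b1_mem (A : Assemblee n r) (hn : 0 < n) : A.b1 ∈ A.blockEnds := by
  have h := A.blockEnds_nonempty hn
  rw [b1, ← Finset.coe_max' h, WithBot.unbotD_coe]
  exact Finset.max'_mem _ h

lemma br_mem (A : Assemblee n r) (hn : 0 < n) : A.br ∈ A.blockEnds := by
  have h := A.blockEnds_nonempty hn
  rw [br, ← Finset.coe_min' h, WithTop.untopD_coe]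
  exact Finset.min'_mem _ h

lemma le_b1 (A : Assemblee n r) {x : ℕ} (hx : x ∈ A.blockEnds) : x ≤ A.b1 := by
  have h : A.blockEnds.Nonempty := ⟨x, hx⟩
  rw [b1, ← Finset.coe_max' h, WithBot.unbotD_coe]
  exact Finset.le_max' _ _ hx

lemma br_le (A : Assemblee n r) {x : ℕ} (hx : x ∈ A.blockEnds) : A.br ≤ x := by
  have h : A.blockEnds.Nonempty := ⟨x, hx⟩
  rw [br, ← Finset.coe_min' h, WithTop.untopD_coe]
  exact Finset.min'_le _ _ hx

lemma br_le_b1 (A : Assemblee n r) (hn : 0 < n) : A.br ≤ A.b1 :=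
  A.le_b1 (A.br_mem hn)

lemma blockEnds_bounds (A : Assemblee n r) {x : ℕ} (hx : x ∈ A.blockEnds) :
    1 ≤ x ∧ x ≤ n := by
  obtain ⟨p, _, rfl⟩ := Finset.mem_image.mp hx
  exact ⟨A.val_pos p, A.val_le p⟩

lemma val_mem_blockEnds (A : Assemblee n r) {p : Fin n} (hp : p ∈ A.ends) :
    A.val p ∈ A.blockEnds := Finset.mem_image_of_mem _ hp

lemma mem_largeSet (A : Assemblee n r) (p : Fin n) :
    p ∈ A.largeSet ↔ A.b1 < A.val p := by simp [largeSet]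

/-- The abstract order-reversing mirror on a finset of positions. -/
def mir (s : Finset (Fin n)) (p : Fin n) (hp : p ∈ s) : Fin n :=
  (s.orderIsoOfFin rfl (Fin.rev ((s.orderIsoOfFin rfl).symm ⟨p, hp⟩)) : Fin n)

lemma mir_mem (s : Finset (Fin n)) (p : Fin n) (hp : p ∈ s) : mir s p hp ∈ s :=
  (s.orderIsoOfFin rfl (Fin.rev ((s.orderIsoOfFin rfl).symm ⟨p, hp⟩))).2

lemma mir_mir (s : Finset (Fin n)) (p : Fin n) (hp : p ∈ s) :
    mir s (mir s p hp) (mir_mem s p hp) = p := by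
  unfold mir
  show ((s.orderIsoOfFin rfl (Fin.rev ((s.orderIsoOfFin rfl).symm
    (s.orderIsoOfFin rfl (Fin.rev ((s.orderIsoOfFin rfl).symm ⟨p, hp⟩)))))) : Fin n) = p
  rw [OrderIso.symm_apply_apply, Fin.rev_rev, OrderIso.apply_symm_apply]

lemma mir_congr {s t : Finset (Fin n)} (h : s = t) (p : Fin n) (hp : p ∈ s) :
    mir s p hp = mir t p (h ▸ hp) := by subst h; rfl

lemma largeMirror_eq (A : Assemblee n r) (p : Fin n) (hp : p ∈ A.largeSet) :
    A.largeMirror p hp = mir A.largeSet p hp := rfl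

lemma rhoVal_large (A : Assemblee n r) {p : Fin n} (hp : p ∈ A.largeSet) :
    A.rhoVal p = A.val (mir A.largeSet p hp) := by
  unfold rhoVal
  rw [dif_pos hp]
  rfl

lemma rhoVal_small (A : Assemblee n r) {p : Fin n} (h : A.val p < A.br) :
    A.rhoVal p = A.br - A.val p := by
  have hns : p ∉ A.largeSet := by
    rw [A.mem_largeSet]
    have := A.br_le_b1 p.pos
    omega
  unfold rhoVal
  rw [dif_neg hns, if_pos h]

lemma rhoVal_mid (A : Assemblee n r) {p : Fin n} (h1 : A.br ≤ A.val p)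
    (h2 : A.val p ≤ A.b1) : A.rhoVal p = A.val p := by
  have hns : p ∉ A.largeSet := by rw [A.mem_largeSet]; omega
  unfold rhoVal
  rw [dif_neg hns, if_neg (by omega)]

lemma trichotomy (A : Assemblee n r) (p : Fin n) :
    p ∈ A.largeSet ∨ A.val p < A.br ∨ (A.br ≤ A.val p ∧ A.val p ≤ A.b1) := by
  by_cases h : p ∈ A.largeSet
  · exact Or.inl h
  · rw [A.mem_largeSet] at h
    by_cases h2 : A.val p < A.br
    · exact Or.inr (Or.inl h2)
    · exact Or.inr (Or.inr ⟨by omega, by omega⟩)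

lemma rhoVal_large_gt (A : Assemblee n r) {p : Fin n} (hp : p ∈ A.largeSet) :
    A.b1 < A.rhoVal p := by
  rw [A.rhoVal_large hp]
  exact (A.mem_largeSet _).mp (mir_mem _ _ _)

lemma rhoVal_small_lt (A : Assemblee n r) {p : Fin n} (h : A.val p < A.br) :
    A.rhoVal p < A.br ∧ 1 ≤ A.rhoVal p := by
  rw [A.rhoVal_small h]
  have := A.val_pos p
  omega

lemma rhoVal_pos (A : Assemblee n r) (p : Fin n) : 1 ≤ A.rhoVal p := by
  rcases A.trichotomy p with h | h | ⟨h1, h2⟩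
  · rw [A.rhoVal_large h]; exact A.val_pos _
  · exact (A.rhoVal_small_lt h).2
  · rw [A.rhoVal_mid h1 h2]; exact A.val_pos _

lemma rhoVal_le (A : Assemblee n r) (p : Fin n) : A.rhoVal p ≤ n := by
  have hbr := A.blockEnds_bounds (A.br_mem p.pos)
  rcases A.trichotomy p with h | h | ⟨h1, h2⟩
  · rw [A.rhoVal_large h]; exact A.val_le _
  · rw [A.rhoVal_small h]; omega
  · rw [A.rhoVal_mid h1 h2]; exact A.val_le _

lemma rhoVal_ends (A : Assemblee n r) {p : Fin n} (hp : p ∈ A.ends) :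
    A.rhoVal p = A.val p := by
  have h := A.val_mem_blockEnds hp
  exact A.rhoVal_mid (A.br_le h) (A.le_b1 h)

lemma rhoVal_injective (A : Assemblee n r) : Function.Injective A.rhoVal := by
  intro p q h
  have hb : A.br ≤ A.b1 := A.br_le_b1 p.pos
  rcases A.trichotomy p with hp | hp | ⟨hp1, hp2⟩ <;>
    rcases A.trichotomy q with hq | hq | ⟨hq1, hq2⟩
  · -- both large
    rw [A.rhoVal_large hp, A.rhoVal_large hq] at h
    have := A.val_injective h
    have h2 : mir A.largeSet (mir A.largeSet p hp) (mir_mem _ _ _) =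
        mir A.largeSet (mir A.largeSet q hq) (mir_mem _ _ _) := by
      congr 1
    rwa [mir_mir, mir_mir] at h2
  · exact absurd h (by have := A.rhoVal_large_gt hp; have := A.rhoVal_small_lt hq; omega)
  · exact absurd h (by
      have := A.rhoVal_large_gt hp
      rw [A.rhoVal_mid hq1 hq2] at *
      omega)
  · exact absurd h (by have := A.rhoVal_large_gt hq; have := A.rhoVal_small_lt hp; omega)
  · -- both small
    rw [A.rhoVal_small hp, A.rhoVal_small hq] at h
    have := A.val_pos p; have := A.val_pos q
    exact A.val_injective (by omega)
  · exact absurd h (by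
      have := (A.rhoVal_small_lt hp).1
      rw [A.rhoVal_mid hq1 hq2]
      omega)
  · exact absurd h (by
      have := A.rhoVal_large_gt hq
      rw [A.rhoVal_mid hp1 hp2]
      omega)
  · exact absurd h (by
      have := (A.rhoVal_small_lt hq).1
      rw [A.rhoVal_mid hp1 hp2]
      omega)
  · rw [A.rhoVal_mid hp1 hp2, A.rhoVal_mid hq1 hq2] at h
    exact A.val_injective h

end Assemblee

/-- For every assemblée `A` of size `(n,r)`, the sequence `ρ(A)` is
again an assemblée of size `(n,r)` whose block-ends are the same values occurring
in the same positions as in `A`, and `ρ(ρ(A)) = A`; that is, `ρ` is an involution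
on the set of assemblées of size `(n,r)`. -/
theorem rho_involutive (n r : ℕ) (A : Assemblee n r) :
    ∃ B : Assemblee n r,
      B.val = A.rhoVal ∧
      B.ends = A.ends ∧
      (∀ p ∈ A.ends, B.val p = A.val p) ∧
      B.rhoVal = A.val := by
  classical
  have hpos := A.rhoVal_pos
  have hle := A.rhoVal_le
  set f : Fin n → Fin n := fun p => ⟨A.rhoVal p - 1, by have := hpos p; have := hle p; omega⟩
    with hf
  have finj : Function.Injective f := by
    intro p q h
    apply A.rhoVal_injective
    have h1 := hpos p; have h2 := hpos q
    have h3 : A.rhoVal p - 1 = A.rhoVal q - 1 := congrArg Fin.val h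
    omega
  set e := Equiv.ofBijective f (Finite.injective_iff_bijective.mp finj) with he
  have heval : ∀ p, (e p : ℕ) + 1 = A.rhoVal p := by
    intro p
    have := hpos p
    simp only [he, Equiv.ofBijective_apply, hf]
    omega
  have hass : IsAssemblee n r e A.ends := by
    refine ⟨A.2.1, A.2.2.1, ?_⟩
    intro p hp q hq hpq
    have hA := A.2.2.2 p hp q hq hpq
    have hA' : (A.1.1 q : ℕ) < (A.1.1 p : ℕ) := hA
    have h1 : (e p : ℕ) + 1 = (A.1.1 p : ℕ) + 1 := by rw [heval p, A.rhoVal_ends hp]; rfl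
    have h2 : (e q : ℕ) + 1 = (A.1.1 q : ℕ) + 1 := by rw [heval q, A.rhoVal_ends hq]; rfl
    show (e q : ℕ) < (e p : ℕ)
    omega
  set B : Assemblee n r := ⟨(e, A.ends), hass⟩ with hB
  have hBval : ∀ p, B.val p = A.rhoVal p := heval
  have hBends : B.ends = A.ends := rfl
  have hBE : B.blockEnds = A.blockEnds := by
    unfold Assemblee.blockEnds
    rw [hBends]
    exact Finset.image_congr fun p hp => (hBval p).trans (A.rhoVal_ends hp)
  have hb1 : B.b1 = A.b1 := by unfold Assemblee.b1; rw [hBE]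
  have hbr : B.br = A.br := by unfold Assemblee.br; rw [hBE]
  have hLS : B.largeSet = A.largeSet := by
    ext q
    rw [Assemblee.mem_largeSet, Assemblee.mem_largeSet, hb1, hBval]
    rcases A.trichotomy q with h | h | ⟨h1, h2⟩
    · have := A.rhoVal_large_gt h
      rw [A.mem_largeSet] at h
      constructor <;> intro <;> assumption
    · have hs := A.rhoVal_small_lt h
      have := A.br_le_b1 q.pos
      constructor <;> intro <;> omega
    · rw [A.rhoVal_mid h1 h2]
  refine ⟨B, funext hBval, rfl, fun p hp => by rw [hBval p, A.rhoVal_ends hp], ?_⟩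
  · funext p
    rcases A.trichotomy p with hp | hp | ⟨hp1, hp2⟩
    · have hp' : p ∈ B.largeSet := hLS ▸ hp
      rw [B.rhoVal_large hp', Assemblee.mir_congr hLS p hp', hBval,
        A.rhoVal_large (Assemblee.mir_mem A.largeSet p hp), Assemblee.mir_mir]
    · have hbrb := A.blockEnds_bounds (A.br_mem p.pos)
      have hvp := A.val_pos p
      have h' : B.val p < B.br := by
        rw [hBval, hbr, A.rhoVal_small hp]
        omega
      rw [B.rhoVal_small h', hbr, hBval, A.rhoVal_small hp]
      omega
    · have h1 : B.br ≤ B.val p := by rw [hBval, hbr, A.rhoVal_mid hp1 hp2]; exact hp1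
      have h2 : B.val p ≤ B.b1 := by rw [hBval, hb1, A.rhoVal_mid hp1 hp2]; exact hp2
      rw [B.rhoVal_mid h1 h2, hBval, A.rhoVal_mid hp1 hp2]
end
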